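/- arXiv:1606.08532 — 3 statements merged into one kernel-verified Lean document; each statement's English description precedes it below -/
import Mathlib

section
/- Let G be a theta graph on n vertices and let A ∪ B be a partition of the vertex set of G into two non-empty subsets such that G is not a bipartite graph with bipartition classes A and B. Then for every integer r with 1 ≤ r < n, G contains a path of length r (i.e., with r edges) with one endpoint in A and the other endpoint in B. -/
/-- A theta graph: a Hamiltonian cycle (a cycle passing through all vertices)
together with exactly one additional edge, which joins two vertices that are
non-consecutive on the cycle (i.e. it is not an edge of the cycle). -/
def IsThetaGraph {V : Type*} [Fintype V] [DecidableEq V] (G : SimpleGraph V) : Prop :=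
  ∃ (v : V) (c : G.Walk v v), c.IsHamiltonianCycle ∧
    ∃ e : Sym2 V, e ∉ c.edges ∧ G.edgeSet = {f | f ∈ c.edges} ∪ {e}

/-!
Suppose no path of length `r` joins `A` to `B`. List the Hamiltonian cycle periodically as
`g : ℤ → V`, with the chord joining `g 0` and `g p`; then `c i := (g i ∈ A)` agrees at the two ends
of every path of length `r`. Arcs of the cycle make `r` a period of `c`. Paths through the chord
make `p - 1` (if `r ≤ n - p`) or `p + 1` (if `r ≤ p`) a period, so the least period `d` of `c` is
smaller than `p` and `n - p`; they also show that `c` is symmetric about `(p + r - 1) / 2` and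
`(p - r + 1) / 2` on windows of length at least `d`, hence everywhere. Composing the two
reflections, `2r - 2` and therefore `2` is a period: `c` alternates along the cycle, `r` is even,
the first reflection forces `p` to be odd, and so every edge of `G` joins `A` to `B`.
-/

open Function

namespace Function

variable {α : Type*}

def periods {G : Type*} [AddGroup G] (f : G → α) : AddSubgroup G where
  carrier := {c | Periodic f c}
  zero_mem' := by simp
  add_mem' := Periodic.add_period
  neg_mem' := Periodic.neg

variable {f : ℤ → α}

lemma Periodic.exists_pos_dvd {n : ℤ} (hf : Periodic f n) (hn : n ≠ 0) :
    ∃ d, 0 < d ∧ Periodic f d ∧ ∀ c, Periodic f c → d ∣ c := by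
  obtain ⟨a, ha⟩ := Int.subgroup_cyclic (periods f)
  have iff_dvd : ∀ c, Periodic f c ↔ a ∣ c := fun c => by
    rw [← Int.mem_zmultiples_iff, AddSubgroup.zmultiples_eq_closure, ← ha]; rfl
  have ha0 : a ≠ 0 := by
    rintro rfl
    exact hn (zero_dvd_iff.1 ((iff_dvd n).1 hf))
  exact ⟨|a|, abs_pos.2 ha0, (iff_dvd _).2 (self_dvd_abs a),
    fun c hc => (abs_dvd a c).2 ((iff_dvd c).1 hc)⟩

lemma Periodic.eq_of_dvd_sub {c i j : ℤ} (hf : Periodic f c) (h : c ∣ i - j) : f i = f j := by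
  obtain ⟨k, hk⟩ := h
  rw [show i = j + k * c by linarith [mul_comm c k]]
  exact hf.int_mul k j

lemma Periodic.forall_of_forall_Ico {P : ℤ → Prop} {e : ℤ} (hP : Periodic P e) (he : 0 < e)
    {a : ℤ} (h : ∀ u, a ≤ u → u < a + e → P u) (u : ℤ) : P u := by
  rw [← hP.sub_int_mul_eq ((u - a) / e), Int.cast_id]
  have hdiv := Int.mul_ediv_add_emod (u - a) e
  have := Int.emod_nonneg (u - a) he.ne'
  have := Int.emod_lt_of_pos (u - a) he
  apply h <;> linarith [mul_comm e ((u - a) / e)]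

lemma Periodic.periodic_of_forall_Ico {e : ℤ} (hf : Periodic f e) (he : 0 < e) {a T : ℤ}
    (h : ∀ u, a ≤ u → u < a + e → f (u + T) = f u) : Periodic f T :=
  have hP : Periodic (fun u => f (u + T) = f u) e := fun u => by
    simp only [add_right_comm u e T, hf _]
  hP.forall_of_forall_Ico he h

lemma Periodic.reflect_of_forall_Ico {e : ℤ} (hf : Periodic f e) (he : 0 < e) {a σ : ℤ}
    (h : ∀ u, a ≤ u → u < a + e → f (σ - u) = f u) (u : ℤ) : f (σ - u) = f u :=
  have hP : Periodic (fun u => f (σ - u) = f u) e := fun u => by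
    simp only [← sub_sub, hf.sub_eq, hf _]
  hP.forall_of_forall_Ico he h u

lemma periodic_sub_of_reflect {σ σ' : ℤ} (h : ∀ u, f (σ - u) = f u)
    (h' : ∀ u, f (σ' - u) = f u) : Periodic f (σ - σ') := fun x =>
  calc f (x + (σ - σ')) = f (σ - (σ' - x)) := by ring_nf
    _ = f x := by rw [h, h']

lemma Periodic.periodic_one {i : ℤ} (hf : Periodic f 2) (h : f (i + 1) = f i) :
    Periodic f 1 := fun x => by
  rcases Int.even_or_odd' (x - i) with ⟨k, hk | hk⟩
  · rw [hf.eq_of_dvd_sub (i := x) (j := i) ⟨k, hk⟩,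
      hf.eq_of_dvd_sub (i := x + 1) (j := i + 1) ⟨k, by omega⟩, h]
  · rw [hf.eq_of_dvd_sub (i := x) (j := i + 1) ⟨k, by omega⟩,
      hf.eq_of_dvd_sub (i := x + 1) (j := i) ⟨k + 1, by omega⟩, h]

lemma Periodic.apply_add_one_ne (hf : Periodic f 2) (hne : ∃ x y, f x ≠ f y) (i : ℤ) :
    f (i + 1) ≠ f i := fun h => by
  obtain ⟨x, y, hxy⟩ := hne
  exact hxy ((hf.periodic_one h).eq_of_dvd_sub (one_dvd _))

end Function

section ChordedCycle

variable {α : Type*}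

/- `c` colours the cycle `ℤ/nℤ`, which has the chord `{0, p}`. Each field says that `c` agrees at
the two ends of every path of length `r` made of the chord and two arcs of the cycle: both arcs on
the side of length `n - p`, both on the side of length `p`, or one on each side, leaving `0`
forwards resp. backwards. -/
structure ChordPathInvariant (c : ℤ → α) (n p r : ℤ) : Prop where
  out : r ≤ n - p → ∀ u, 1 - r ≤ u → u ≤ 0 → c (u + (p + r - 1)) = c u
  inn : r ≤ p → ∀ u, 0 ≤ u → u < r → c (u + (p - r + 1)) = c u
  fwd : ∀ u, 0 ≤ u → r - (n - p) ≤ u → u < p → u < r → c (p + r - 1 - u) = c u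
  bwd : ∀ u, p - n < u → 1 - r ≤ u → u ≤ 0 → u ≤ p - r → c (p - r + 1 - u) = c u

variable {c : ℤ → α} {n p r : ℤ}

theorem ChordPathInvariant.periodic_two (hc : ChordPathInvariant c n p r) (hn : Periodic c n)
    (hr : Periodic c r) (hr1 : 1 ≤ r) (hrn : r < n) (hp : 2 ≤ p) (hpn : p + 2 ≤ n) :
    Periodic c 2 := by
  obtain ⟨d, hd0, hd, hdvd⟩ := hn.exists_pos_dvd (by omega)
  have hle : ∀ T, Periodic c T → 0 < T → d ≤ T := fun T hT hT0 => Int.le_of_dvd hT0 (hdvd T hT)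
  have hdr := hle r hr (by omega)
  have hdnr := hle (n - r) (hn.sub_period hr) (by omega)
  have hdp : d < p := by
    rcases le_or_gt r (n - p) with h | h
    · have hpr := hr.periodic_of_forall_Ico (by omega) (a := 1 - r)
        fun u h1 h2 => hc.out h u h1 (by omega)
      have := hle _ (hpr.sub_period hr) (by omega)
      omega
    · omega
  have hdq : d < n - p := by
    rcases le_or_gt r p with h | h
    · have hpr := hr.periodic_of_forall_Ico (by omega) (a := 0)
        fun u h1 h2 => hc.inn h u h1 (by omega)
      have := hle _ (hn.sub_period (hpr.add_period hr)) (by omega)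
      omega
    · omega
  have hσ := hd.reflect_of_forall_Ico hd0 (a := max 0 (r - (n - p))) (σ := p + r - 1)
    fun u h1 h2 => hc.fwd u (by omega) (by omega) (by omega) (by omega)
  have hσ' := hd.reflect_of_forall_Ico hd0 (a := max (p - n + 1) (1 - r)) (σ := p - r + 1)
    fun u h1 h2 => hc.bwd u (by omega) (by omega) (by omega) (by omega)
  have h2r := (hr.add_period hr).sub_period (periodic_sub_of_reflect hσ hσ')
  rwa [show r + r - (p + r - 1 - (p - r + 1)) = 2 by ring] at h2r

theorem ChordPathInvariant.alternating (hc : ChordPathInvariant c n p r) (hn : Periodic c n)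
    (hr : Periodic c r) (hr1 : 1 ≤ r) (hrn : r < n) (hp : 2 ≤ p) (hpn : p + 2 ≤ n)
    (hne : ∃ x y, c x ≠ c y) :
    (∀ i, c (i + 1) ≠ c i) ∧ c p ≠ c 0 := by
  have h2 := hc.periodic_two hn hr hr1 hrn hp hpn
  have halt := h2.apply_add_one_ne hne
  have hr2 : 2 ∣ r := by
    by_contra hodd
    apply halt 0
    rw [h2.eq_of_dvd_sub (i := 0 + 1) (j := r) (by omega)]
    simpa using hr 0
  have hp2 : ¬ 2 ∣ p := fun hev => by
    set u := max 0 (r - (n - p))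
    apply halt u
    rw [h2.eq_of_dvd_sub (i := u + 1) (j := p + r - 1 - u) (by omega)]
    exact hc.fwd u (by omega) (by omega) (by omega) (by omega)
  refine ⟨halt, fun h => halt 0 ?_⟩
  rw [h2.eq_of_dvd_sub (i := 0 + 1) (j := p) (by omega), h]

end ChordedCycle

namespace SimpleGraph

variable {V : Type*} {G : SimpleGraph V}

lemma Walk.IsPath.append_cons {a u v b : V} {P : G.Walk a u} {Q : G.Walk v b} (hP : P.IsPath)
    (hQ : Q.IsPath) (h : G.Adj u v) (hPQ : ∀ x ∈ P.support, x ∉ Q.support) :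
    (P.append (Walk.cons h Q)).IsPath := by
  rw [Walk.isPath_def, Walk.support_append, Walk.support_cons, List.tail_cons, List.nodup_append]
  exact ⟨hP.support_nodup, hQ.support_nodup, fun x hx y hy hxy => hPQ x hx (hxy ▸ hy)⟩

structure IsCyclicEnumeration (G : SimpleGraph V) (n : ℕ) (g : ℤ → V) : Prop where
  periodic : Periodic g n
  adj : ∀ i, G.Adj (g i) (g (i + 1))
  dvd_sub_of_eq : ∀ ⦃i j⦄, g i = g j → (n : ℤ) ∣ i - j

namespace IsCyclicEnumeration

variable {n : ℕ} {g : ℤ → V}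

lemma add_const (hg : G.IsCyclicEnumeration n g) (s : ℤ) :
    G.IsCyclicEnumeration n (fun i => g (i + s)) where
  periodic := hg.periodic.add_const s
  adj i := by simpa only [add_right_comm i 1 s] using hg.adj (i + s)
  dvd_sub_of_eq i j h := by simpa using hg.dvd_sub_of_eq h

lemma ne_of_lt_of_lt_add (hg : G.IsCyclicEnumeration n g) {i j : ℤ} (hij : i < j)
    (hji : j < i + n) : g i ≠ g j := fun h => by
  have := Int.le_of_dvd (by omega) (hg.dvd_sub_of_eq h.symm)
  omega

lemma exists_isPath_of_le (hg : G.IsCyclicEnumeration n g) {a b : ℤ} (hab : a ≤ b)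
    (hba : b < a + n) : ∃ w : G.Walk (g a) (g b), w.IsPath ∧ w.length = (b - a).natAbs ∧
      ∀ v ∈ w.support, ∃ i ∈ Set.Icc a b, g i = v := by
  induction b, hab using Int.leInduction with
  | base => exact ⟨.nil, .nil, by simp, by simp⟩
  | succ b hab ih =>
    obtain ⟨w, hw, hlen, hsupp⟩ := ih (by omega)
    have hnew : g (b + 1) ∉ w.support := fun hb => by
      obtain ⟨i, hi, hgi⟩ := hsupp _ hb
      exact hg.ne_of_lt_of_lt_add (by grind) (by grind) hgi
    refine ⟨w.concat (hg.adj b), hw.concat hnew _, by simp [hlen]; omega, ?_⟩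
    simp only [Walk.support_concat, List.mem_append, List.mem_singleton]
    rintro v (hv | rfl)
    · obtain ⟨i, hi, hgi⟩ := hsupp v hv
      exact ⟨i, ⟨hi.1, by grind⟩, hgi⟩
    · exact ⟨b + 1, ⟨by omega, le_rfl⟩, rfl⟩

lemma exists_isPath (hg : G.IsCyclicEnumeration n g) (a b : ℤ) (hab : (b - a).natAbs < n) :
    ∃ w : G.Walk (g a) (g b), w.IsPath ∧ w.length = (b - a).natAbs ∧
      ∀ v ∈ w.support, ∃ i ∈ Set.uIcc a b, g i = v := by
  rcases le_total a b with h | h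
  · obtain ⟨w, hw, hlen, hsupp⟩ := hg.exists_isPath_of_le h (by omega)
    exact ⟨w, hw, hlen, fun v hv => by
      simpa [Set.uIcc_of_le h] using hsupp v hv⟩
  · obtain ⟨w, hw, hlen, hsupp⟩ := hg.exists_isPath_of_le h (by omega)
    refine ⟨w.reverse, hw.reverse, by simp [hlen]; omega, fun v hv => ?_⟩
    simpa [Set.uIcc_of_ge h] using hsupp v (by simpa using hv)

variable {α : Type*} {col : V → α} {r : ℕ}

lemma apply_eq_of_adj (hg : G.IsCyclicEnumeration n g)
    (hcol : ∀ x y (w : G.Walk x y), w.IsPath → w.length = r → col x = col y)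
    {a u v b : ℤ} (huv : G.Adj (g u) (g v))
    (hsep : ∀ i ∈ Set.uIcc a u, ∀ j ∈ Set.uIcc v b, i < j ∧ j < i + n)
    (hlen : (u - a).natAbs + (b - v).natAbs + 1 = r) : col (g a) = col (g b) := by
  have hav := hsep a Set.left_mem_uIcc v Set.left_mem_uIcc
  have huv' := hsep u Set.right_mem_uIcc v Set.left_mem_uIcc
  have hub := hsep u Set.right_mem_uIcc b Set.right_mem_uIcc
  obtain ⟨P, hP, hPlen, hPsupp⟩ := hg.exists_isPath a u (by omega)
  obtain ⟨Q, hQ, hQlen, hQsupp⟩ := hg.exists_isPath v b (by omega)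
  refine hcol _ _ _ (hP.append_cons hQ huv fun x hx hx' => ?_) (by simp [hPlen, hQlen]; omega)
  obtain ⟨i, hi, rfl⟩ := hPsupp x hx
  obtain ⟨j, hj, hgj⟩ := hQsupp _ hx'
  exact hg.ne_of_lt_of_lt_add (hsep i hi j hj).1 (hsep i hi j hj).2 hgj.symm

theorem alternating_of_adj (hg : G.IsCyclicEnumeration n g)
    (hcol : ∀ x y (w : G.Walk x y), w.IsPath → w.length = r → col x = col y)
    (hr1 : 1 ≤ r) (hrn : r < n) {p : ℤ} (hch : G.Adj (g 0) (g p)) (hp : 2 ≤ p)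
    (hpn : p + 2 ≤ n) (hne : ∃ x y, col (g x) ≠ col (g y)) :
    (∀ i, col (g (i + 1)) ≠ col (g i)) ∧ col (g p) ≠ col (g 0) := by
  have hr : Periodic (col ∘ g) r := fun x => by
    obtain ⟨w, hw, hlen, -⟩ := hg.exists_isPath x (x + r) (by omega)
    exact (hcol _ _ w hw (by omega)).symm
  have hchord : ChordPathInvariant (col ∘ g) n p r := by
    constructor <;> intros <;>
      refine (hg.apply_eq_of_adj hcol hch (fun i hi j hj => ?_) ?_).symm
    all_goals (try simp only [Set.mem_uIcc] at *); omega
  exact hchord.alternating (hg.periodic.comp col) hr (by omega) (by omega) hp hpn hne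

lemma exists_chord (hg : G.IsCyclicEnumeration n g) (hn : 0 < n) {a b : ℤ}
    (hab : G.Adj (g a) (g b)) (hnot : ∀ i, s(g a, g b) ≠ s(g i, g (i + 1))) :
    ∃ p : ℤ, 2 ≤ p ∧ p + 2 ≤ n ∧ g (a + p) = g b := by
  have hp0 := Int.emod_nonneg (b - a) (by omega : (n : ℤ) ≠ 0)
  have hpn := Int.emod_lt_of_pos (b - a) (by omega : (0 : ℤ) < n)
  have hgb : g (a + (b - a) % n) = g b :=
    hg.periodic.eq_of_dvd_sub ⟨-((b - a) / n), by linarith [Int.mul_ediv_add_emod (b - a) n]⟩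
  refine ⟨(b - a) % n, ?_, ?_, hgb⟩
  · by_contra! hlt
    obtain h | h : (b - a) % n = 0 ∨ (b - a) % n = 1 := by omega
    · exact hab.ne (by simpa [h] using hgb)
    · exact hnot a (by rw [← hgb, h])
  · by_contra! hgt
    have hlast : (b - a) % n = -1 + n := by omega
    apply hnot (a - 1)
    rw [← hgb, hlast, ← add_assoc, hg.periodic, Sym2.eq_swap, sub_add_cancel, sub_eq_add_neg]

end IsCyclicEnumeration

namespace Walk

variable {u : V}

def getCycleVert (c : G.Walk u u) (i : ℤ) : V := c.getVert (i % c.length).toNat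

variable {c : G.Walk u u}

lemma getCycleVert_natCast {k : ℕ} (hk : k ≤ c.length) : c.getCycleVert k = c.getVert k := by
  rcases hk.lt_or_eq with hk | rfl
  · simp [getCycleVert, Int.emod_eq_of_lt (Int.natCast_nonneg k) (by omega : (k : ℤ) < c.length)]
  · simp [getCycleVert]

lemma getCycleVert_periodic : Periodic c.getCycleVert c.length := fun i => by
  simp [getCycleVert]

lemma getCycleVert_add_one (hc : c.length ≠ 0) (i : ℤ) :
    c.getCycleVert (i + 1) = c.getVert ((i % c.length).toNat + 1) := by
  have h0 := Int.emod_nonneg i (by omega : (c.length : ℤ) ≠ 0)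
  have hlt := Int.emod_lt_of_pos i (by omega : (0 : ℤ) < c.length)
  rw [← getCycleVert_natCast (by omega)]
  exact getCycleVert_periodic.eq_of_dvd_sub ⟨i / c.length, by
    push_cast; linarith [Int.mul_ediv_add_emod i c.length, Int.toNat_of_nonneg h0]⟩

lemma IsCycle.isCyclicEnumeration (hc : c.IsCycle) :
    G.IsCyclicEnumeration c.length c.getCycleVert where
  periodic := getCycleVert_periodic
  adj i := by
    have hpos : 0 < c.length := by have := hc.three_le_length; omega
    have h0 := Int.emod_nonneg i (by omega : (c.length : ℤ) ≠ 0)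
    have hlt := Int.emod_lt_of_pos i (by omega : (0 : ℤ) < c.length)
    rw [getCycleVert_add_one hpos.ne']
    exact c.adj_getVert_succ (by omega)
  dvd_sub_of_eq i j h := by
    have hpos : 0 < c.length := by have := hc.three_le_length; omega
    have hi := Int.emod_nonneg i (by omega : (c.length : ℤ) ≠ 0)
    have hi' := Int.emod_lt_of_pos i (by omega : (0 : ℤ) < c.length)
    have hj := Int.emod_nonneg j (by omega : (c.length : ℤ) ≠ 0)
    have hj' := Int.emod_lt_of_pos j (by omega : (0 : ℤ) < c.length)
    have hij := hc.getVert_injOn' (by simp only [Set.mem_ofPred_eq]; omega)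
      (by simp only [Set.mem_ofPred_eq]; omega) h
    exact Int.ModEq.dvd (show j % c.length = i % c.length by omega)

lemma mem_edges_iff_exists_getCycleVert (hc : c.length ≠ 0) {e : Sym2 V} :
    e ∈ c.edges ↔ ∃ i, s(c.getCycleVert i, c.getCycleVert (i + 1)) = e := by
  constructor
  · intro he
    obtain ⟨k, hk, rfl⟩ := List.mem_iff_getElem.1 he
    rw [Walk.length_edges] at hk
    refine ⟨k, ?_⟩
    rw [← Nat.cast_add_one, getCycleVert_natCast hk.le, getCycleVert_natCast hk, getElem_edges]
  · rintro ⟨i, rfl⟩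
    have h0 := Int.emod_nonneg i (by omega : (c.length : ℤ) ≠ 0)
    have hlt := Int.emod_lt_of_pos i (by omega : (0 : ℤ) < c.length)
    rw [mk_mem_edges_iff_exists, getCycleVert_add_one hc]
    exact ⟨(i % c.length).toNat, by omega, rfl⟩

lemma IsHamiltonianCycle.surjective_getCycleVert [DecidableEq V] (hc : c.IsHamiltonianCycle) :
    Surjective c.getCycleVert := fun v => by
  obtain ⟨k, hk, hkl⟩ := mem_support_iff_exists_getVert.1 (hc.mem_support v)
  exact ⟨k, by rw [getCycleVert_natCast hkl, hk]⟩

end Walk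

end SimpleGraph

open SimpleGraph

lemma IsThetaGraph.exists_cyclicEnumeration {V : Type*} [Fintype V] [DecidableEq V]
    {G : SimpleGraph V} (hθ : IsThetaGraph G) :
    ∃ (g : ℤ → V) (p : ℤ), G.IsCyclicEnumeration (Fintype.card V) g ∧ Surjective g ∧
      2 ≤ p ∧ p + 2 ≤ Fintype.card V ∧ G.Adj (g 0) (g p) ∧
      ∀ x y, G.Adj x y → (∃ i, s(x, y) = s(g i, g (i + 1))) ∨ s(x, y) = s(g 0, g p) := by
  obtain ⟨v, c, hc, e, he, hE⟩ := hθ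
  have hpos : c.length ≠ 0 := by have := hc.isCycle.three_le_length; omega
  have hadj_iff : ∀ x y, G.Adj x y ↔ s(x, y) ∈ c.edges ∨ s(x, y) = e := fun x y => by
    rw [← mem_edgeSet, hE]; rfl
  have hg := hc.isCycle.isCyclicEnumeration
  have hsurj := hc.surjective_getCycleVert
  induction e using Sym2.ind with | h x y => ?_
  obtain ⟨a, rfl⟩ := hsurj x
  obtain ⟨b, rfl⟩ := hsurj y
  have hab := (hadj_iff _ _).2 (Or.inr rfl)
  obtain ⟨p, hp, hpn, hgp⟩ := hg.exists_chord (by omega) hab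
    fun i h => he ((Walk.mem_edges_iff_exists_getCycleVert hpos).2 ⟨i, h.symm⟩)
  rw [hc.length_eq] at hg hpn
  refine ⟨fun i => c.getCycleVert (i + a), p, hg.add_const a, fun w => ?_, hp, hpn,
    by simpa [add_comm p a, hgp] using hab, fun x y hxy => ?_⟩
  · obtain ⟨i, rfl⟩ := hsurj w
    exact ⟨i - a, by simp⟩
  · rcases (hadj_iff x y).1 hxy with h | h
    · obtain ⟨i, hi⟩ := (Walk.mem_edges_iff_exists_getCycleVert hpos).1 h
      exact Or.inl ⟨i - a, by rw [← hi]; ring_nf⟩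
    · exact Or.inr (by simp [h, add_comm p a, hgp])

lemma mem_and_mem_or_of_mem_ne {V : Type*} {A B : Set V} (hAB : A ∪ B = Set.univ) {x y : V}
    (hxy : (x ∈ A) ≠ (y ∈ A)) : (x ∈ A ∧ y ∈ B) ∨ (x ∈ B ∧ y ∈ A) := by
  have hB : ∀ z, z ∉ A → z ∈ B := fun z hz => (Set.eq_univ_iff_forall.1 hAB z).resolve_left hz
  by_cases hx : x ∈ A <;> by_cases hy : y ∈ A
  · exact absurd (by simp [hx, hy]) hxy
  · exact Or.inl ⟨hx, hB y hy⟩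
  · exact Or.inr ⟨hB x hx, hy⟩
  · exact absurd (by simp [hx, hy]) hxy

theorem stmt_4 {V : Type*} [Fintype V] [DecidableEq V] (G : SimpleGraph V)
    (hθ : IsThetaGraph G) (A B : Set V)
    (hAB : A ∪ B = Set.univ) (hdisj : Disjoint A B)
    (hA : A.Nonempty) (hB : B.Nonempty)
    (hnotbip : ¬ ∀ x y : V, G.Adj x y →
      (x ∈ A ∧ y ∈ B) ∨ (x ∈ B ∧ y ∈ A)) :
    ∀ r : ℕ, 1 ≤ r → r < Fintype.card V →
      ∃ (a b : V) (p : G.Walk a b), p.IsPath ∧ p.length = r ∧ a ∈ A ∧ b ∈ B := by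
  intro r hr1 hrn
  by_contra! hno
  have hcol : ∀ x y (w : G.Walk x y), w.IsPath → w.length = r → (x ∈ A) = (y ∈ A) :=
    fun x y w hw hlen => by_contra fun hxy => by
      rcases mem_and_mem_or_of_mem_ne hAB hxy with ⟨hx, hy⟩ | ⟨hx, hy⟩
      · exact hno x y w hw hlen hx hy
      · exact hno y x w.reverse hw.reverse (by simpa using hlen) hy hx
  obtain ⟨g, p, hg, hsurj, hp, hpn, hch, hedge⟩ := hθ.exists_cyclicEnumeration
  have hne : ∃ i j, (g i ∈ A) ≠ (g j ∈ A) := by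
    obtain ⟨i, hi⟩ := hsurj hA.some
    obtain ⟨j, hj⟩ := hsurj hB.some
    refine ⟨i, j, fun h => Set.disjoint_left.1 hdisj ?_ (hj ▸ hB.some_mem)⟩
    exact h ▸ hi ▸ hA.some_mem
  obtain ⟨halt, hchord⟩ := hg.alternating_of_adj hcol hr1 hrn hch hp hpn hne
  refine hnotbip fun x y hxy => mem_and_mem_or_of_mem_ne hAB ?_
  rcases hedge x y hxy with ⟨i, hi⟩ | hi <;> rcases Sym2.eq_iff.1 hi with ⟨rfl, rfl⟩ | ⟨rfl, rfl⟩
  exacts [(halt i).symm, halt i, hchord.symm, hchord]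
end

section
/- For integers k and ℓ with 3 ≤ ℓ ≤ k, let F' be a bipartite graph containing no cycle of length ℓ whose minimum degree is at least 12·d_k(ℓ). Then every non-empty set X of vertices of F' with |X| ≤ k satisfies |∂X| > 2|X|, where ∂X is the set of vertices of F' outside X having at least one neighbor in X. -/
/-!
Let `Y = X ∪ ∂X` and suppose `|Y| ≤ 3|X|`. Every vertex of `X` keeps its whole neighbourhood in
`Y`, so the induced graph `F'[Y]` has at least `6 d |X| ≥ 2 d |Y|` edges, where `d = d_k(ℓ)`.
If `|Y| ≤ k`, packing `⌊k/|Y|⌋` disjoint copies of `F'[Y]` into `k` vertices gives a bipartite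
`C_ℓ`-free graph of average degree at least `e(F'[Y])/|Y| ≥ 2d`, which is impossible.
If `|Y| > k`, a `k`-subset of `Y` whose induced edge density is at least that of `F'[Y]` gives
`12 |X| (k - 1) ≤ |Y| (|Y| - 1)`, hence `4(k - 1) < |Y| ≤ 3k`, which forces `k = ℓ = 3` and
`|Y| ≤ 9`. Then the path `K_{1,2}` shows `d ≥ 4/3`, so degrees in `X` would be at least `16`,
more than `|Y| - 1`.
-/

/-- `G` contains a cycle with exactly `m` vertices (equivalently, `m` edges). -/
def HasCycleOfLength {V : Type*} (G : SimpleGraph V) (m : ℕ) : Prop :=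
  ∃ (v : V) (c : G.Walk v v), c.IsCycle ∧ c.length = m

/-- The average degree `2e(G)/|V(G)|` of a finite graph. -/
noncomputable def avgDeg {V : Type*} [Fintype V] (G : SimpleGraph V) : ℝ :=
  2 * (G.edgeSet.ncard : ℝ) / (Fintype.card V)

/-- `d_k(ℓ)`: the largest possible average degree of a bipartite `C_ℓ`-free
graph on `k` vertices. -/
noncomputable def maxBipCFreeAvgDeg (k ℓ : ℕ) : ℝ :=
  sSup {x : ℝ | ∃ G : SimpleGraph (Fin k),
    G.Colorable 2 ∧ ¬ HasCycleOfLength G ℓ ∧ x = avgDeg G}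

/-- `∂X`: the set of vertices not in `X` with at least one neighbor in `X`. -/
def vertexBoundary {V : Type*} (G : SimpleGraph V) (X : Set V) : Set V :=
  {v | v ∉ X ∧ ∃ x ∈ X, G.Adj v x}

open SimpleGraph Finset

section

variable {V W α : Type*}

section Cycles

variable {G : SimpleGraph V} {H : SimpleGraph W} {m : ℕ}

theorem HasCycleOfLength.map (f : G ↪g H) (h : HasCycleOfLength G m) :
    HasCycleOfLength H m := by
  obtain ⟨v, c, hc, rfl⟩ := h
  exact ⟨f v, c.map f.toHom, hc.map f.injective, c.length_map _⟩

theorem SimpleGraph.Walk.IsCycle.hasCycleOfLength_of_support_subset_range (f : H ↪g G) {v : V}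
    {c : G.Walk v v} (hc : c.IsCycle) (hs : ∀ x ∈ c.support, x ∈ Set.range f) :
    HasCycleOfLength H c.length := by
  have hmap := c.map_induce hs
  have hc' : (c.induce _ hs).IsCycle := by
    rw [← hmap] at hc
    exact hc.of_map
  have hlen : (c.induce _ hs).length = c.length := by
    have := congrArg Walk.length hmap
    rwa [Walk.length_map] at this
  exact hlen ▸ HasCycleOfLength.map f.isoInduceRange.symm.toEmbedding ⟨_, _, hc', rfl⟩

theorem HasCycleOfLength.of_map (f : W ↪ V) (h : HasCycleOfLength (H.map f) m) :
    HasCycleOfLength H m := by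
  obtain ⟨v, c, hc, rfl⟩ := h
  refine hc.hasCycleOfLength_of_support_subset_range (Embedding.map f H) fun x hx => ?_
  obtain ⟨e, he, hxe⟩ := (Walk.mem_support_iff_exists_mem_edges_of_not_nil hc.not_nil).mp hx
  have := c.edges_subset_edgeSet he
  rw [edgeSet_map] at this
  obtain ⟨e', -, rfl⟩ := this
  induction e' using Sym2.ind with | _ a b => ?_
  simp only [Function.Embedding.sym2Map_apply, Sym2.map_mk, Sym2.mem_iff] at hxe
  rcases hxe with rfl | rfl
  exacts [⟨a, rfl⟩, ⟨b, rfl⟩]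

theorem HasCycleOfLength.of_bot_boxProd (h : HasCycleOfLength ((⊥ : SimpleGraph α) □ H) m) :
    HasCycleOfLength H m := by
  classical
  obtain ⟨v, c, hc, rfl⟩ := h
  refine hc.hasCycleOfLength_of_support_subset_range (boxProdRight ⊥ H v.1) fun x hx => ⟨x.2, ?_⟩
  have := (reachable_boxProd.mp (c.dropUntil x hx).reachable).1
  rw [reachable_bot] at this
  exact Prod.ext this.symm rfl

theorem HasCycleOfLength.le_ncard_edgeSet [Finite V] (h : HasCycleOfLength G m) :
    m ≤ G.edgeSet.ncard := by
  classical
  obtain ⟨v, c, hc, rfl⟩ := h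
  calc c.length = c.edges.toFinset.card := by
        rw [List.toFinset_card_of_nodup hc.edges_nodup, Walk.length_edges]
    _ ≤ G.edgeSet.ncard := by
        rw [← Set.ncard_coe_finset]
        exact Set.ncard_le_ncard (fun e he => c.edges_subset_edgeSet (by simpa using he))

end Cycles

section AverageDegree

theorem two_mul_ncard_edgeSet_eq_sum_degree [Fintype V] (G : SimpleGraph V) [DecidableRel G.Adj] :
    2 * G.edgeSet.ncard = ∑ v, G.degree v := by
  rw [← coe_edgeFinset, Set.ncard_coe_finset, sum_degrees_eq_twice_card_edges]

theorem ncard_edgeSet_map (f : W ↪ V) (H : SimpleGraph W) :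
    (H.map f).edgeSet.ncard = H.edgeSet.ncard := by
  rw [edgeSet_map, Set.ncard_image_of_injective _ f.sym2Map.injective]

theorem ncard_edgeSet_bot_boxProd [Fintype α] [Fintype W] (H : SimpleGraph W) :
    ((⊥ : SimpleGraph α) □ H).edgeSet.ncard = Fintype.card α * H.edgeSet.ncard := by
  classical
  have hsum := two_mul_ncard_edgeSet_eq_sum_degree ((⊥ : SimpleGraph α) □ H)
  simp only [degree_boxProd, bot_degree, zero_add, Fintype.sum_prod_type, sum_const, card_univ,
    smul_eq_mul, ← two_mul_ncard_edgeSet_eq_sum_degree H] at hsum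
  linarith

theorem avgDeg_le_two_mul_ncard_edgeSet [Fintype V] (G : SimpleGraph V) :
    avgDeg G ≤ 2 * G.edgeSet.ncard := by
  rcases (Fintype.card V).eq_zero_or_pos with h | h
  · simp only [avgDeg, h, Nat.cast_zero, div_zero]
    positivity
  · exact div_le_self (by positivity) (by exact_mod_cast h)

theorem avgDeg_le_maxBipCFreeAvgDeg {k ℓ : ℕ} (G : SimpleGraph (Fin k)) (h2 : G.Colorable 2)
    (hf : ¬ HasCycleOfLength G ℓ) : avgDeg G ≤ maxBipCFreeAvgDeg k ℓ := by
  refine le_csSup ⟨2 * Nat.card (Sym2 (Fin k)), ?_⟩ ⟨G, h2, hf, rfl⟩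
  rintro _ ⟨G', -, -, rfl⟩
  exact (avgDeg_le_two_mul_ncard_edgeSet G').trans (by gcongr; exact_mod_cast Set.ncard_le_card _)

theorem two_mul_ncard_edgeSet_div_le_maxBipCFreeAvgDeg [Fintype W] {H : SimpleGraph W}
    {k ℓ : ℕ} (hW : Fintype.card W ≤ k) (h2 : H.Colorable 2) (hf : ¬ HasCycleOfLength H ℓ) :
    2 * (H.edgeSet.ncard : ℝ) / k ≤ maxBipCFreeAvgDeg k ℓ := by
  obtain ⟨f⟩ : Nonempty (W ↪ Fin k) := Function.Embedding.nonempty_of_card_le (by simpa using hW)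
  have := avgDeg_le_maxBipCFreeAvgDeg (H.map f) (h2.map f) (fun h => hf h.of_map)
  rwa [avgDeg, ncard_edgeSet_map, Fintype.card_fin] at this

theorem four_div_le_maxBipCFreeAvgDeg {k ℓ : ℕ} (hk : 3 ≤ k) (hℓ : 3 ≤ ℓ) :
    4 / (k : ℝ) ≤ maxBipCFreeAvgDeg k ℓ := by
  have hK : (completeBipartiteGraph (Fin 1) (Fin 2)).edgeSet.ncard = 2 := by
    rw [Set.ncard_def, encard_edgeSet_completeBipartiteGraph]
    simp
  have := two_mul_ncard_edgeSet_div_le_maxBipCFreeAvgDeg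
    (H := completeBipartiteGraph (Fin 1) (Fin 2)) (ℓ := ℓ) (by simpa using hk)
    (by simpa using (CompleteBipartiteGraph.bicoloring (Fin 1) (Fin 2)).colorable)
    (fun h => by have := h.le_ncard_edgeSet; omega)
  norm_num [hK] at this
  exact this

theorem ncard_edgeSet_le_maxBipCFreeAvgDeg_mul [Fintype W] [Nonempty W] {H : SimpleGraph W}
    {k ℓ : ℕ} (hW : Fintype.card W ≤ k) (h2 : H.Colorable 2) (hf : ¬ HasCycleOfLength H ℓ) :
    (H.edgeSet.ncard : ℝ) ≤ maxBipCFreeAvgDeg k ℓ * Fintype.card W := by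
  set N := Fintype.card W
  -- `k / N` disjoint copies of `H` fit into `k` vertices and fill more than half of them.
  have hN : 0 < N := Fintype.card_pos
  have hk : k < 2 * (k / N) * N := by
    nlinarith [Nat.div_add_mod k N, Nat.mod_lt k hN, Nat.div_pos hW hN]
  set m := k / N
  have hsnd : (⊥ : SimpleGraph (Fin m)).boxProd H →g H :=
    ⟨Prod.snd, fun h => by simp only [boxProd_adj, bot_adj, false_and, false_or] at h; exact h.1⟩
  have hcopies := two_mul_ncard_edgeSet_div_le_maxBipCFreeAvgDeg (ℓ := ℓ)
    (by simpa using Nat.div_mul_le_self k N) (h2.of_hom hsnd) (fun h => hf h.of_bot_boxProd)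
  have hkR : (0 : ℝ) < k := by exact_mod_cast hN.trans_le hW
  rw [ncard_edgeSet_bot_boxProd, Fintype.card_fin, div_le_iff₀ hkR] at hcopies
  push_cast at hcopies
  have hk' : (k : ℝ) ≤ 2 * m * N := by exact_mod_cast hk.le
  have hd : 0 ≤ maxBipCFreeAvgDeg k ℓ := by
    by_contra!
    nlinarith
  have hm : (0 : ℝ) < m := by exact_mod_cast Nat.div_pos hW hN
  have : (m : ℝ) * (2 * H.edgeSet.ncard) ≤ m * (2 * (maxBipCFreeAvgDeg k ℓ * N)) := by
    nlinarith
  linarith [le_of_mul_le_mul_left this hm]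

end AverageDegree

section AdjPairCount

variable [Fintype V] [DecidableEq V] (G : SimpleGraph V) [DecidableRel G.Adj]

def adjPairCount (s : Finset V) : ℕ := ∑ u ∈ s, #(G.neighborFinset u ∩ s)

theorem adjPairCount_erase_add {s : Finset V} {v : V} (hv : v ∈ s) :
    adjPairCount G (s.erase v) + 2 * #(G.neighborFinset v ∩ s) = adjPairCount G s := by
  have hv' : #(G.neighborFinset v ∩ s.erase v) = #(G.neighborFinset v ∩ s) := by
    rw [inter_erase, erase_eq_of_notMem (by simp)]
  have hu : ∀ u, #(G.neighborFinset u ∩ s) =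
      #(G.neighborFinset u ∩ s.erase v) + if G.Adj u v then 1 else 0 := by
    intro u
    rw [inter_erase]
    split_ifs with h
    · rw [card_erase_add_one (by simp [h, hv])]
    · rw [erase_eq_of_notMem (by simp [h]), add_zero]
  have hfilter : s.filter (G.Adj · v) = G.neighborFinset v ∩ s := by
    ext u
    simp [adj_comm, and_comm]
  rw [adjPairCount, adjPairCount, sum_congr rfl fun u _ => hu u, sum_add_distrib, sum_boole,
    Nat.cast_id, hfilter, ← add_sum_erase s _ hv, hv']
  ring

-- Delete a vertex of minimum degree in `G[s]`.
theorem exists_mem_sub_two_mul_adjPairCount_le {s : Finset V} (hs : s.Nonempty) :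
    ∃ v ∈ s, (#s - 2) * adjPairCount G s ≤ #s * adjPairCount G (s.erase v) := by
  obtain ⟨v, hv, hmin⟩ := s.exists_min_image (fun u => #(G.neighborFinset u ∩ s)) hs
  refine ⟨v, hv, ?_⟩
  have hsum : #s * #(G.neighborFinset v ∩ s) ≤ adjPairCount G s := by
    rw [adjPairCount, ← smul_eq_mul]
    exact card_nsmul_le_sum s _ _ hmin
  have herase := adjPairCount_erase_add G hv
  rcases lt_or_ge #s 2 with h | h
  · simp [Nat.sub_eq_zero_of_le h.le]
  · zify [h] at *
    nlinarith

theorem exists_subset_card_eq_adjPairCount_mul_le {k : ℕ} (hk : 2 ≤ k) (s : Finset V)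
    (hks : k ≤ #s) : ∃ t ⊆ s, #t = k ∧
      adjPairCount G s * (k * (k - 1)) ≤ adjPairCount G t * (#s * (#s - 1)) := by
  obtain hks | hks := hks.eq_or_lt
  · exact ⟨s, subset_rfl, hks.symm, by rw [hks]⟩
  obtain ⟨v, hv, hstep⟩ :=
    exists_mem_sub_two_mul_adjPairCount_le G (s := s) (card_pos.mp (by omega))
  have hcard : #(s.erase v) = #s - 1 := card_erase_of_mem hv
  obtain ⟨t, hts, htk, ht⟩ :=
    exists_subset_card_eq_adjPairCount_mul_le hk (s.erase v) (by omega)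
  refine ⟨t, hts.trans (erase_subset v s), htk,
    Nat.le_of_mul_le_mul_left ?_ (by omega : 0 < #s - 2)⟩
  rw [hcard, show #s - 1 - 1 = #s - 2 by omega] at ht
  calc (#s - 2) * (adjPairCount G s * (k * (k - 1)))
      = (#s - 2) * adjPairCount G s * (k * (k - 1)) := by ring
    _ ≤ #s * adjPairCount G (s.erase v) * (k * (k - 1)) := by gcongr
    _ = #s * (adjPairCount G (s.erase v) * (k * (k - 1))) := by ring
    _ ≤ #s * (adjPairCount G t * ((#s - 1) * (#s - 2))) := by gcongr
    _ = (#s - 2) * (adjPairCount G t * (#s * (#s - 1))) := by ring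
termination_by #s
decreasing_by rw [card_erase_of_mem hv]; omega

theorem two_mul_ncard_edgeSet_induce (s : Finset V) :
    2 * (G.induce (s : Set V)).edgeSet.ncard = adjPairCount G s := by
  rw [two_mul_ncard_edgeSet_eq_sum_degree, adjPairCount, ← sum_coe_sort s]
  refine Fintype.sum_congr _ _ fun v => ?_
  have := congrArg card (map_neighborFinset_induce (G := G) (s := (s : Set V)) v)
  rw [card_map, toFinset_coe] at this
  rw [← card_neighborFinset_eq_degree]
  convert this

theorem mul_card_le_adjPairCount {δ : ℝ} {S s : Finset V} (hSs : S ⊆ s)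
    (hN : ∀ v ∈ S, G.neighborFinset v ⊆ s) (hδ : ∀ v ∈ S, δ ≤ G.degree v) :
    δ * #S ≤ adjPairCount G s :=
  calc δ * #S = ∑ v ∈ S, δ := by rw [sum_const, nsmul_eq_mul, mul_comm]
    _ ≤ ∑ v ∈ S, (#(G.neighborFinset v ∩ s) : ℝ) := sum_le_sum fun v hv => by
        rw [inter_eq_left.mpr (hN v hv), card_neighborFinset_eq_degree]
        exact hδ v hv
    _ ≤ adjPairCount G s := by
        rw [adjPairCount, Nat.cast_sum]
        exact sum_le_sum_of_subset_of_nonneg hSs fun _ _ _ => by positivity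

variable {G} {k ℓ : ℕ}

theorem adjPairCount_le_of_card_le (h2 : G.Colorable 2) (hf : ¬ HasCycleOfLength G ℓ)
    {s : Finset V} (hs : s.Nonempty) (hsk : #s ≤ k) :
    (adjPairCount G s : ℝ) ≤ 2 * maxBipCFreeAvgDeg k ℓ * #s := by
  have : Nonempty (s : Set V) := hs.to_subtype
  have := ncard_edgeSet_le_maxBipCFreeAvgDeg_mul (H := G.induce s) (by simpa using hsk)
    (h2.of_hom (Embedding.induce _).toHom) (fun h => hf (h.map (Embedding.induce _)))
  rw [← two_mul_ncard_edgeSet_induce]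
  simp only [coe_sort_coe, Fintype.card_coe] at this
  push_cast
  linarith

theorem adjPairCount_mul_le_of_le_card (h2 : G.Colorable 2) (hf : ¬ HasCycleOfLength G ℓ)
    {s : Finset V} (hk : 2 ≤ k) (hks : k ≤ #s) :
    (adjPairCount G s : ℝ) * (k - 1) ≤ maxBipCFreeAvgDeg k ℓ * (#s * (#s - 1)) := by
  obtain ⟨t, -, htk, hdense⟩ := exists_subset_card_eq_adjPairCount_mul_le G hk s hks
  have ht := two_mul_ncard_edgeSet_div_le_maxBipCFreeAvgDeg (H := G.induce t) (k := k) (ℓ := ℓ)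
    (by simp [htk]) (h2.of_hom (Embedding.induce _).toHom)
    (fun h => hf (h.map (Embedding.induce _)))
  have hkR : (0 : ℝ) < k := by exact_mod_cast (by omega : 0 < k)
  have hPt : (adjPairCount G t : ℝ) ≤ maxBipCFreeAvgDeg k ℓ * k := by
    rw [div_le_iff₀ hkR] at ht
    rw [← two_mul_ncard_edgeSet_induce]
    push_cast
    exact ht
  have hdense' :
      (adjPairCount G s : ℝ) * (k * (k - 1)) ≤ adjPairCount G t * (#s * (#s - 1)) := by
    have := (Nat.cast_le (α := ℝ)).mpr hdense
    push_cast [Nat.cast_sub (by omega : 1 ≤ k), Nat.cast_sub (by omega : 1 ≤ #s)] at this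
    exact this
  have hs1 : (1 : ℝ) ≤ #s := by exact_mod_cast (by omega : 1 ≤ #s)
  have := mul_le_mul_of_nonneg_right hPt (by nlinarith : (0 : ℝ) ≤ #s * (#s - 1))
  refine le_of_mul_le_mul_right ?_ hkR
  nlinarith

end AdjPairCount

section DenseSets

variable [Fintype V] [DecidableEq V] {G : SimpleGraph V} [DecidableRel G.Adj] {k ℓ : ℕ}
  {S Y : Finset V}

theorem six_mul_card_le_card_of_card_le (h2 : G.Colorable 2) (hf : ¬ HasCycleOfLength G ℓ)
    (hd : 0 < maxBipCFreeAvgDeg k ℓ) (hS : S.Nonempty) (hSY : S ⊆ Y)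
    (hN : ∀ v ∈ S, G.neighborFinset v ⊆ Y)
    (hδ : ∀ v ∈ S, 12 * maxBipCFreeAvgDeg k ℓ ≤ G.degree v) (hYk : #Y ≤ k) :
    6 * #S ≤ #Y := by
  have hsum := mul_card_le_adjPairCount G hSY hN hδ
  have hsmall := adjPairCount_le_of_card_le h2 hf (hS.mono hSY) hYk
  have : (6 * #S : ℝ) ≤ #Y :=
    le_of_mul_le_mul_left (by linarith) (by positivity : 0 < 2 * maxBipCFreeAvgDeg k ℓ)
  exact_mod_cast this

theorem twelve_mul_card_mul_le_of_le_card (h2 : G.Colorable 2) (hf : ¬ HasCycleOfLength G ℓ)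
    (hd : 0 < maxBipCFreeAvgDeg k ℓ) (hSY : S ⊆ Y) (hN : ∀ v ∈ S, G.neighborFinset v ⊆ Y)
    (hδ : ∀ v ∈ S, 12 * maxBipCFreeAvgDeg k ℓ ≤ G.degree v) (hk : 2 ≤ k) (hkY : k ≤ #Y) :
    12 * #S * (k - 1) ≤ #Y * (#Y - 1) := by
  have hsum := mul_card_le_adjPairCount G hSY hN hδ
  have hlarge := adjPairCount_mul_le_of_le_card h2 hf hk hkY
  have hk1 : (0 : ℝ) ≤ k - 1 := by
    have : (1 : ℝ) ≤ k := by exact_mod_cast (by omega : 1 ≤ k)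
    linarith
  have := mul_le_mul_of_nonneg_right hsum hk1
  have : ((12 * #S * (k - 1) : ℕ) : ℝ) ≤ ((#Y * (#Y - 1) : ℕ) : ℝ) := by
    push_cast [Nat.cast_sub (by omega : 1 ≤ k), Nat.cast_sub (by omega : 1 ≤ #Y)]
    exact le_of_mul_le_mul_left (by linarith) hd
  exact_mod_cast this

theorem three_mul_card_lt_card (hℓ : 3 ≤ ℓ) (hk : ℓ ≤ k) (h2 : G.Colorable 2)
    (hf : ¬ HasCycleOfLength G ℓ) (hS : S.Nonempty) (hSk : #S ≤ k) (hSY : S ⊆ Y)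
    (hN : ∀ v ∈ S, G.neighborFinset v ⊆ Y)
    (hδ : ∀ v ∈ S, 12 * maxBipCFreeAvgDeg k ℓ ≤ G.degree v) : 3 * #S < #Y := by
  have hd4 := four_div_le_maxBipCFreeAvgDeg (hℓ.trans hk) hℓ
  have hd : 0 < maxBipCFreeAvgDeg k ℓ :=
    lt_of_lt_of_le (div_pos four_pos (by exact_mod_cast (by omega : 0 < k))) hd4
  have hS0 := hS.card_pos
  by_contra! hY
  rcases le_or_gt #Y k with hYk | hkY
  · have := six_mul_card_le_card_of_card_le h2 hf hd hS hSY hN hδ hYk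
    omega
  have h12 := twelve_mul_card_mul_le_of_le_card h2 hf hd hSY hN hδ (by omega) hkY.le
  have h4 : 4 * (k - 1) ≤ #Y - 1 := by
    refine Nat.le_of_mul_le_mul_left ?_ (by omega : 0 < 3 * #S)
    calc 3 * #S * (4 * (k - 1)) = 12 * #S * (k - 1) := by ring
      _ ≤ #Y * (#Y - 1) := h12
      _ ≤ 3 * #S * (#Y - 1) := Nat.mul_le_mul_right _ hY
  -- So `k = 3` and `|Y| ≤ 9`, while `d ≥ 4/3` pushes the degrees in `S` up to `16`.
  obtain ⟨v, hv⟩ := hS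
  have hdeg : G.degree v ≤ #Y - 1 := by
    rw [← card_neighborFinset_eq_degree, ← card_erase_of_mem (hSY hv)]
    exact card_le_card fun u hu =>
      mem_erase.mpr ⟨(G.ne_of_adj ((mem_neighborFinset G v u).mp hu)).symm, hN v hv hu⟩
  obtain rfl : k = 3 := by omega
  have : (G.degree v : ℝ) ≤ 8 := by exact_mod_cast (by omega : G.degree v ≤ 8)
  norm_num at hd4
  linarith [hδ v hv]

end DenseSets

theorem neighborSet_subset_union_vertexBoundary {G : SimpleGraph V} {X : Set V} {v : V}
    (hv : v ∈ X) : G.neighborSet v ⊆ X ∪ vertexBoundary G X := fun u hu => by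
  by_cases huX : u ∈ X
  · exact Or.inl huX
  · exact Or.inr ⟨huX, v, hv, hu.symm⟩

end

theorem stmt_6 (k ℓ : ℕ) (hℓ : 3 ≤ ℓ) (hk : ℓ ≤ k)
    {V : Type*} [Fintype V] (F' : SimpleGraph V)
    (hbip : F'.Colorable 2) (hfree : ¬ HasCycleOfLength F' ℓ)
    (hmindeg : ∀ v : V, 12 * maxBipCFreeAvgDeg k ℓ ≤ ((F'.neighborSet v).ncard : ℝ)) :
    ∀ X : Set V, X.Nonempty → X.ncard ≤ k →
      2 * X.ncard < (vertexBoundary F' X).ncard := by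
  classical
  intro X hX hXk
  have hN : ∀ v ∈ X.toFinset, F'.neighborFinset v ⊆ (X ∪ vertexBoundary F' X).toFinset :=
    fun v hv => by
      rw [neighborFinset_def]
      exact Set.toFinset_subset_toFinset.mpr
        (neighborSet_subset_union_vertexBoundary (Set.mem_toFinset.mp hv))
  have hδ : ∀ v ∈ X.toFinset, 12 * maxBipCFreeAvgDeg k ℓ ≤ F'.degree v := fun v _ => by
    simpa [Set.ncard_eq_toFinset_card', ← neighborFinset_def] using hmindeg v
  have h3 := three_mul_card_lt_card hℓ hk hbip hfree (Set.toFinset_nonempty.mpr hX)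
    (by rwa [← Set.ncard_eq_toFinset_card'])
    (Set.toFinset_subset_toFinset.mpr Set.subset_union_left) hN hδ
  rw [← Set.ncard_eq_toFinset_card', ← Set.ncard_eq_toFinset_card'] at h3
  have := Set.ncard_union_le X (vertexBoundary F' X)
  omega
end

section
/- Let d > 0 and let G be a graph with average degree at least 2d whose vertex set is partitioned into non-empty sets L_0, L_1, …, L_t such that every edge of G joins a vertex of L_{i−1} to a vertex of L_i for some i with 1 ≤ i ≤ t. Then there exists i with 1 ≤ i ≤ t such that the number of edges of G between L_{i−1} and L_i is at least (d/2)·(|L_{i−1}| + |L_i|); that is, the bipartite subgraph formed by these edges has average degree at least d. -/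
/-- The set of edges of `G` with one endpoint in `A` and the other in `B`. -/
def edgesBetween {V : Type*} (G : SimpleGraph V) (A B : Set V) : Set (Sym2 V) :=
  {e | e ∈ G.edgeSet ∧ ∃ x ∈ A, ∃ y ∈ B, e = s(x, y)}

lemma sum_ncard_le_natCard_of_pairwiseDisjoint {α ι : Type*} [Finite α] {s : Finset ι}
    {f : ι → Set α} (h : (s : Set ι).PairwiseDisjoint f) :
    ∑ i ∈ s, (f i).ncard ≤ Nat.card α := by
  rw [← finsum_mem_coe_finset, ← s.finite_toSet.ncard_biUnion (fun _ _ ↦ Set.toFinite _) h]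
  exact Set.ncard_le_card _

lemma sum_ncard_consecutive_le_two_mul_natCard {α : Type*} [Finite α] {t : ℕ}
    {L : ℕ → Set α} (hdisj : ∀ i ≤ t, ∀ j ≤ t, i ≠ j → Disjoint (L i) (L j)) :
    ∑ i ∈ Finset.Icc 1 t, ((L (i - 1)).ncard + (L i).ncard) ≤ 2 * Nat.card α := by
  have hlower : ∑ i ∈ Finset.Icc 1 t, (L (i - 1)).ncard ≤ Nat.card α := by
    refine sum_ncard_le_natCard_of_pairwiseDisjoint fun i hi j hj hij ↦ ?_
    simp only [Finset.coe_Icc, Set.mem_Icc] at hi hj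
    exact hdisj _ (by omega) _ (by omega) (by omega)
  have hupper : ∑ i ∈ Finset.Icc 1 t, (L i).ncard ≤ Nat.card α := by
    refine sum_ncard_le_natCard_of_pairwiseDisjoint fun i hi j hj hij ↦ ?_
    simp only [Finset.coe_Icc, Set.mem_Icc] at hi hj
    exact hdisj _ hi.2 _ hj.2 hij
  rw [Finset.sum_add_distrib]
  omega

section AverageDegree

variable {V : Type*} [Fintype V] (G : SimpleGraph V)

lemma exists_adj_of_avgDeg_pos (h : 0 < avgDeg G) : ∃ x y, G.Adj x y := by
  refine G.ne_bot_iff_exists_adj.1 fun hG ↦ h.ne' ?_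
  simp [avgDeg, hG]

lemma mul_card_le_ncard_edgeSet_of_two_mul_le_avgDeg {d : ℝ} (h : 2 * d ≤ avgDeg G) :
    d * Fintype.card V ≤ G.edgeSet.ncard := by
  rcases (Fintype.card V).eq_zero_or_pos with hV | hV
  · simp [hV]
  · have hV' : (0 : ℝ) < Fintype.card V := by exact_mod_cast hV
    rw [avgDeg, le_div_iff₀ hV'] at h
    linarith

end AverageDegree

lemma ncard_edgeSet_le_sum_ncard_edgesBetween {V ι : Type*} [Finite V] (G : SimpleGraph V)
    (s : Finset ι) (A B : ι → Set V)
    (h : ∀ x y, G.Adj x y → ∃ i ∈ s, (x ∈ A i ∧ y ∈ B i) ∨ (x ∈ B i ∧ y ∈ A i)) :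
    G.edgeSet.ncard ≤ ∑ i ∈ s, (edgesBetween G (A i) (B i)).ncard := by
  refine le_trans (Set.ncard_le_ncard ?_ (Set.toFinite _)) (s.set_ncard_biUnion_le _)
  rintro ⟨x, y⟩ (hxy : G.Adj x y)
  obtain ⟨i, hi, ⟨hx, hy⟩ | ⟨hx, hy⟩⟩ := h x y hxy
  · exact Set.mem_biUnion hi ⟨hxy, x, hx, y, hy, rfl⟩
  · exact Set.mem_biUnion hi ⟨hxy, y, hy, x, hx, Sym2.eq_swap⟩

theorem stmt_9_general (d : ℝ) (hd : 0 < d) {V : Type*} [Fintype V] (G : SimpleGraph V)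
    (t : ℕ) (L : ℕ → Set V)
    (hdisj : ∀ i ≤ t, ∀ j ≤ t, i ≠ j → Disjoint (L i) (L j))
    (hedges : ∀ x y : V, G.Adj x y → ∃ i, 1 ≤ i ∧ i ≤ t ∧
      ((x ∈ L (i - 1) ∧ y ∈ L i) ∨ (x ∈ L i ∧ y ∈ L (i - 1))))
    (hdeg : 2 * d ≤ avgDeg G) :
    ∃ i, 1 ≤ i ∧ i ≤ t ∧
      (d / 2) * (((L (i - 1)).ncard : ℝ) + ((L i).ncard : ℝ)) ≤
        ((edgesBetween G (L (i - 1)) (L i)).ncard : ℝ) := by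
  have hedges' : ∀ x y, G.Adj x y → ∃ i ∈ Finset.Icc 1 t,
      (x ∈ L (i - 1) ∧ y ∈ L i) ∨ (x ∈ L i ∧ y ∈ L (i - 1)) := fun x y hxy ↦ by
    obtain ⟨i, hi1, hit, hxy⟩ := hedges x y hxy
    exact ⟨i, Finset.mem_Icc.2 ⟨hi1, hit⟩, hxy⟩
  obtain ⟨x, y, hxy⟩ := exists_adj_of_avgDeg_pos G (by linarith)
  obtain ⟨i₀, hi₀, -⟩ := hedges' x y hxy
  obtain ⟨i, hi, hle⟩ := Finset.exists_le_of_sum_le ⟨i₀, hi₀⟩ <| calc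
    ∑ i ∈ Finset.Icc 1 t, d / 2 * (((L (i - 1)).ncard : ℝ) + ((L i).ncard : ℝ))
        = d / 2 * ((∑ i ∈ Finset.Icc 1 t, ((L (i - 1)).ncard + (L i).ncard) : ℕ) : ℝ) := by
          push_cast; rw [Finset.mul_sum]
    _ ≤ d / 2 * ((2 * Nat.card V : ℕ) : ℝ) := by
          gcongr; exact sum_ncard_consecutive_le_two_mul_natCard hdisj
    _ = d * Fintype.card V := by push_cast; rw [Nat.card_eq_fintype_card]; ring
    _ ≤ G.edgeSet.ncard := mul_card_le_ncard_edgeSet_of_two_mul_le_avgDeg G hdeg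
    _ ≤ ∑ i ∈ Finset.Icc 1 t, ((edgesBetween G (L (i - 1)) (L i)).ncard : ℝ) := by
          exact_mod_cast ncard_edgeSet_le_sum_ncard_edgesBetween G _ _ _ hedges'
  exact ⟨i, (Finset.mem_Icc.1 hi).1, (Finset.mem_Icc.1 hi).2, hle⟩

theorem stmt_9 (d : ℝ) (hd : 0 < d) {V : Type*} [Fintype V] (G : SimpleGraph V)
    (t : ℕ) (L : ℕ → Set V)
    (hne : ∀ i ≤ t, (L i).Nonempty)
    (hcover : (⋃ i ∈ Finset.range (t + 1), L i) = Set.univ)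
    (hdisj : ∀ i ≤ t, ∀ j ≤ t, i ≠ j → Disjoint (L i) (L j))
    (hedges : ∀ x y : V, G.Adj x y → ∃ i, 1 ≤ i ∧ i ≤ t ∧
      ((x ∈ L (i - 1) ∧ y ∈ L i) ∨ (x ∈ L i ∧ y ∈ L (i - 1))))
    (hdeg : 2 * d ≤ avgDeg G) :
    ∃ i, 1 ≤ i ∧ i ≤ t ∧
      (d / 2) * (((L (i - 1)).ncard : ℝ) + ((L i).ncard : ℝ)) ≤
        ((edgesBetween G (L (i - 1)) (L i)).ncard : ℝ) :=
  stmt_9_general d hd G t L hdisj hedges hdeg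
end
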